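/- For a finite set of points assigned to K clusters with two demographic groups V₁, V₂, the overall clustering balance b = min_k min(|C_k∩V₁|/|C_k∩V₂|, |C_k∩V₂|/|C_k∩V₁|) satisfies 0 ≤ b ≤ 1, and for any partition into clusters, b ≤ min(|V₁|/|V₂|, |V₂|/|V₁|). -/

import Mathlib

lemma sum_card_inter {P : Type*} [DecidableEq P] [Fintype P] {K : ℕ}
    (C : Fin K → Finset P) (hCpart : ∀ x : P, ∃! k, x ∈ C k) (V : Finset P) :
    ∑ k, (C k ∩ V).card = V.card := by
  rw [← Finset.card_biUnion]
  · congr 1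
    ext x
    simp only [Finset.mem_biUnion, Finset.mem_inter, Finset.mem_univ, true_and]
    constructor
    · rintro ⟨k, _, hx⟩; exact hx
    · intro hx
      obtain ⟨k, hk, _⟩ := hCpart x
      exact ⟨k, hk, hx⟩
  · intro k _ l _ hkl
    rw [Function.onFun, Finset.disjoint_left]
    intro x hx hx'
    obtain ⟨hk, _⟩ := Finset.mem_inter.mp hx
    obtain ⟨hl, _⟩ := Finset.mem_inter.mp hx'
    obtain ⟨m, _, huniq⟩ := hCpart x
    exact hkl ((huniq k hk).trans (huniq l hl).symm)

lemma min_ratio_le_one (a b : ℝ) (ha : 0 ≤ a) (hb : 0 ≤ b) :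
    min (a / b) (b / a) ≤ 1 := by
  rcases le_total a b with h | h
  · exact le_trans (min_le_left _ _) (div_le_one_of_le₀ h hb)
  · exact le_trans (min_le_right _ _) (div_le_one_of_le₀ h ha)

/-- the overall clustering balance lies in [0,1] and is at most
the global group ratio min(|V₁|/|V₂|, |V₂|/|V₁|). -/
theorem stmt_12 {P : Type*} [DecidableEq P] [Fintype P] (K : ℕ) (hK : 0 < K)
    (C : Fin K → Finset P)
    (hCpart : ∀ x : P, ∃! k, x ∈ C k)
    (V1 V2 : Finset P) (hpart : V1 ∪ V2 = Finset.univ) (hdisj : Disjoint V1 V2)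
    (hV1 : 0 < V1.card) (hV2 : 0 < V2.card) :
    letI : Nonempty (Fin K) := Fin.pos_iff_nonempty.mp hK
    let bal : Fin K → ℝ := fun k =>
      min (((C k ∩ V1).card : ℝ) / ((C k ∩ V2).card))
          (((C k ∩ V2).card : ℝ) / ((C k ∩ V1).card))
    let b : ℝ := ⨅ k, bal k
    0 ≤ b ∧ b ≤ 1 ∧ b ≤ min ((V1.card : ℝ) / V2.card) ((V2.card : ℝ) / V1.card) := by
  letI : Nonempty (Fin K) := Fin.pos_iff_nonempty.mp hK
  intro bal b
  have hbdd : BddBelow (Set.range bal) := (Set.finite_range bal).bddBelow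
  have hbal0 : ∀ k, 0 ≤ bal k := fun k =>
    le_min (div_nonneg (Nat.cast_nonneg _) (Nat.cast_nonneg _))
      (div_nonneg (Nat.cast_nonneg _) (Nat.cast_nonneg _))
  have hb0 : 0 ≤ b := le_ciInf hbal0
  refine ⟨hb0, ?_, ?_⟩
  · refine le_trans (ciInf_le hbdd (Classical.arbitrary (Fin K))) ?_
    exact min_ratio_le_one _ _ (Nat.cast_nonneg _) (Nat.cast_nonneg _)
  · have key : ∀ (A B : Finset P), 0 < A.card → 0 < B.card →
        (∑ k, (C k ∩ A).card = A.card) → (∑ k, (C k ∩ B).card = B.card) →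
        (∀ k, bal k ≤ ((C k ∩ A).card : ℝ) / ((C k ∩ B).card)) →
        b ≤ (A.card : ℝ) / B.card := by
      intro A B hA hB hsA hsB hle
      have hex : ∃ k, (C k ∩ A).card * B.card ≤ A.card * (C k ∩ B).card := by
        by_contra hcon
        push_neg at hcon
        have h : ∑ k, A.card * (C k ∩ B).card < ∑ k, (C k ∩ A).card * B.card :=
          Finset.sum_lt_sum_of_nonempty Finset.univ_nonempty (fun k _ => hcon k)
        rw [← Finset.mul_sum, ← Finset.sum_mul, hsA, hsB, Nat.mul_comm] at h
        exact lt_irrefl _ h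
      obtain ⟨k, hk⟩ := hex
      have hbk : b ≤ bal k := ciInf_le hbdd k
      rcases Nat.eq_zero_or_pos (C k ∩ B).card with hz | hpos
      · -- then |C k ∩ A| = 0 too, so bal k = 0
        have hz' : (C k ∩ A).card = 0 := by
          rw [hz, Nat.mul_zero, Nat.le_zero, Nat.mul_eq_zero] at hk
          rcases hk with h | h
          · exact h
          · omega
        refine le_trans hbk (le_trans (hle k) ?_)
        rw [hz', Nat.cast_zero, zero_div]
        exact div_nonneg (Nat.cast_nonneg _) (Nat.cast_nonneg _)
      · refine le_trans hbk (le_trans (hle k) ?_)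
        rw [div_le_div_iff₀ (by exact_mod_cast hpos) (by exact_mod_cast hB)]
        exact_mod_cast hk
    have hsum1 := sum_card_inter C hCpart V1
    have hsum2 := sum_card_inter C hCpart V2
    refine le_min ?_ ?_
    · exact key V1 V2 hV1 hV2 hsum1 hsum2 (fun k => min_le_left _ _)
    · exact key V2 V1 hV2 hV1 hsum2 hsum1 (fun k => min_le_right _ _)
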